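/- arXiv:1204.2926 — 3 statements merged into one kernel-verified Lean document; each statement's English description precedes it below -/
import Mathlib

section
/- Let (ã_k, e_k)_{k≥2} be an i.i.d. sequence of pairs of square-integrable real random variables with E[ã_2²] < 1. Set m = E[ã_2], s = E[ã_2²], μ = E[e_2], σ² = Var(e_2), and c = E[ã_2 e_2]. Then T = Σ_{k=2}^∞ ã_2 ⋯ ã_{k-1} e_k converges in L² and E[T²] = E[e_2²]/(1 - s) + 2 c μ / ((1 - s)(1 - m)). -/
/-!
With `Xᵢ = ã₂ ⋯ ã_{i+1} e_{i+2}`, independence gives `E[Xᵢ²] = sⁱ E[e²]` and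
`E[Xᵢ Xⱼ] = sⁱ c m^(j-i-1) mu` for `i < j`. Since `s < 1`, the `L²` norms of the `Xᵢ` decay
geometrically, so `∑ Xᵢ` converges in `L²`, its `L²` sum agrees a.e. with the pointwise sum `T`,
and `E[T²] = ∑_{i,j} E[Xᵢ Xⱼ]`, a combination of geometric series.
-/

open MeasureTheory ProbabilityTheory Finset
open scoped RealInnerProductSpace

namespace Finset

variable {M : Type*} [CommMonoid M]

lemma prod_range_eq_mul_prod_Ico (f : ℕ → M) {i j : ℕ} (hij : i < j) :
    ∏ k ∈ range j, f k = (∏ k ∈ range i, f k) * f i * ∏ k ∈ Ico (i + 1) j, f k := by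
  rw [← prod_range_mul_prod_Ico f hij.le, prod_eq_prod_Ico_succ_bot hij, mul_assoc]

lemma prod_range_succ_ite_lt (A B : ℕ → M) (i : ℕ) :
    ∏ k ∈ range (i + 1), (if k < i then A k else B k) = (∏ k ∈ range i, A k) * B i := by
  rw [prod_range_succ, if_neg (lt_irrefl i)]
  exact congrArg (· * B i) (prod_congr rfl fun k hk => if_pos (mem_range.1 hk))

lemma prod_range_succ_ite_lt_eq_lt (A B C D : ℕ → M) {i j : ℕ} (hij : i < j) :
    ∏ k ∈ range (j + 1),
        (if k < i then A k else if k = i then B k else if k < j then C k else D k)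
      = (∏ k ∈ range i, A k) * B i * (∏ k ∈ Ico (i + 1) j, C k) * D j := by
  rw [prod_range_succ, prod_range_eq_mul_prod_Ico _ hij, if_neg (lt_irrefl i), if_pos rfl,
    if_neg (by omega), if_neg hij.ne', if_neg (lt_irrefl j)]
  have hA : ∀ k ∈ range i,
      (if k < i then A k else if k = i then B k else if k < j then C k else D k) = A k :=
    fun k hk => if_pos (mem_range.1 hk)
  have hC : ∀ k ∈ Ico (i + 1) j,
      (if k < i then A k else if k = i then B k else if k < j then C k else D k) = C k := by
    intro k hk
    obtain ⟨hik, hkj⟩ := mem_Ico.1 hk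
    rw [if_neg (by omega), if_neg (by omega), if_pos hkj]
  rw [prod_congr rfl hA, prod_congr rfl hC]

end Finset

namespace ProbabilityTheory

variable {Ω ι : Type*} [MeasurableSpace Ω] {μ : Measure Ω}

lemma iIndepFun.integral_finset_prod {X : ι → Ω → ℝ} (hX : iIndepFun X μ)
    (hmeas : ∀ i, AEStronglyMeasurable (X i) μ) (s : Finset ι) :
    ∫ ω, ∏ i ∈ s, X i ω ∂μ = ∏ i ∈ s, ∫ ω, X i ω ∂μ := by
  have := (hX.precomp (g := ((↑) : s → ι)) Subtype.val_injective)
    |>.integral_fun_prod_eq_prod_integral fun i => hmeas i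
  simp_rw [← Finset.prod_coe_sort s]
  exact this

lemma iIndepFun.integrable_finset_prod {X : ι → Ω → ℝ} (hX : iIndepFun X μ)
    (hmeas : ∀ i, Measurable (X i)) (s : Finset ι) (hint : ∀ i ∈ s, Integrable (X i) μ) :
    Integrable (fun ω => ∏ i ∈ s, X i ω) μ := by
  refine ⟨s.aestronglyMeasurable_fun_prod fun i _ => (hmeas i).aestronglyMeasurable, ?_⟩
  have hlin := lintegral_prod_eq_prod_lintegral_of_indepFun s (fun i ω => ‖X i ω‖ₑ)
    (hX.comp (fun _ => enorm) fun _ => measurable_enorm) fun i => (hmeas i).enorm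
  simp only [HasFiniteIntegral, enorm_eq_nnnorm, nnnorm_prod, ENNReal.ofNNReal_finsetProd]
    at hlin ⊢
  rw [hlin]
  exact ENNReal.prod_lt_top fun i hi => (hint i hi).2

variable {β : Type*} [MeasurableSpace β] {Z : ι → Ω → β} {i₀ : ι} {F : ι → β → ℝ}

lemma integral_prod_comp_of_identDistrib (hZ : ∀ i, Measurable (Z i)) (hind : iIndepFun Z μ)
    (hident : ∀ i, IdentDistrib (Z i) (Z i₀) μ μ) (hF : ∀ i, Measurable (F i)) (s : Finset ι) :
    ∫ ω, ∏ i ∈ s, F i (Z i ω) ∂μ = ∏ i ∈ s, ∫ ω, F i (Z i₀ ω) ∂μ := by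
  refine ((hind.comp F hF).integral_finset_prod
    (fun i => ((hF i).comp (hZ i)).aestronglyMeasurable) s).trans ?_
  exact prod_congr rfl fun i _ => ((hident i).comp (hF i)).integral_eq

lemma integrable_prod_comp_of_identDistrib (hZ : ∀ i, Measurable (Z i)) (hind : iIndepFun Z μ)
    (hident : ∀ i, IdentDistrib (Z i) (Z i₀) μ μ) (hF : ∀ i, Measurable (F i)) (s : Finset ι)
    (hint : ∀ i ∈ s, Integrable (fun ω => F i (Z i₀ ω)) μ) :
    Integrable (fun ω => ∏ i ∈ s, F i (Z i ω)) μ :=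
  (hind.comp F hF).integrable_finset_prod (fun i => (hF i).comp (hZ i)) s fun i hi =>
    ((hident i).comp (hF i)).integrable_iff.2 (hint i hi)

end ProbabilityTheory

namespace MeasureTheory

variable {Ω : Type*} [MeasurableSpace Ω] {μ : Measure Ω}

lemma sq_integral_le_integral_sq [IsProbabilityMeasure μ] {X : Ω → ℝ} (hX : MemLp X 2 μ) :
    (∫ ω, X ω ∂μ) ^ 2 ≤ ∫ ω, X ω ^ 2 ∂μ := by
  have hvar := variance_eq_sub hX
  simp only [Pi.pow_apply] at hvar
  linarith [variance_nonneg X μ]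

theorem integral_sq_tsum_of_hasSum {X : ℕ → Ω → ℝ} (hX : ∀ i, MemLp (X i) 2 μ)
    (hsum : Summable fun i => √(∫ ω, X i ω ^ 2 ∂μ)) {V : ℝ}
    (hV : HasSum (fun p : ℕ × ℕ => ∫ ω, X p.1 ω * X p.2 ω ∂μ) V) :
    ∫ ω, (∑' i, X i ω) ^ 2 ∂μ = V := by
  set F : ℕ → Lp ℝ 2 μ := fun i => (hX i).toLp
  have hinner : ∀ i j, ⟪F i, F j⟫ = ∫ ω, X i ω * X j ω ∂μ := fun i j => by
    rw [L2.inner_def]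
    refine integral_congr_ae ?_
    filter_upwards [(hX i).coeFn_toLp, (hX j).coeFn_toLp] with ω hi hj
    rw [Real.inner_apply, hi, hj]
  have hnorm : Summable fun i => ‖F i‖ := by
    refine hsum.congr fun i => ?_
    rw [norm_eq_sqrt_real_inner, hinner]
    simp only [sq]
  have hS : Summable F := hnorm.of_norm
  have henorm : ∑' i, ‖F i‖ₑ ≠ ⊤ := by
    simp_rw [← ofReal_norm]
    rw [← ENNReal.ofReal_tsum_of_nonneg (fun _ => norm_nonneg _) hnorm]
    exact ENNReal.ofReal_ne_top
  have hae : ⇑(∑' i, F i) =ᵐ[μ] fun ω => ∑' i, X i ω := by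
    filter_upwards [Lp.coeFn_tsum henorm, ae_all_iff.2 fun i => (hX i).coeFn_toLp]
      with ω hsum hF
    rw [hsum]
    exact tsum_congr hF
  calc ∫ ω, (∑' i, X i ω) ^ 2 ∂μ = ⟪∑' i, F i, ∑' j, F j⟫ := by
        rw [L2.inner_def]
        refine integral_congr_ae ?_
        filter_upwards [hae] with ω hω
        rw [Real.inner_apply, hω, sq]
    _ = ∑' i, ∑' j, ⟪F i, F j⟫ := by
        have hright : ∀ x, ⟪x, ∑' j, F j⟫ = ∑' j, ⟪x, F j⟫ := fun x => (innerSL ℝ x).map_tsum hS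
        rw [real_inner_comm, hright]
        exact tsum_congr fun i => by rw [real_inner_comm, hright]
    _ = ∑' p : ℕ × ℕ, ∫ ω, X p.1 ω * X p.2 ω ∂μ := by
        simp_rw [hinner]
        exact (hV.summable.tsum_prod).symm
    _ = V := hV.tsum_eq

end MeasureTheory

lemma hasSum_diag_geometric {s : ℝ} (hs : |s| < 1) (d : ℝ) :
    HasSum (fun p : ℕ × ℕ => if p.1 = p.2 then s ^ p.1 * d else 0) (d / (1 - s)) := by
  have hinj : Function.Injective fun n : ℕ => (n, n) := fun _ _ h => congrArg Prod.fst h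
  refine (hinj.hasSum_iff fun p hp => if_neg fun h => hp ⟨p.1, Prod.ext rfl h⟩).mp ?_
  rw [div_eq_inv_mul]
  exact ((hasSum_geometric_of_abs_lt_one hs).mul_right d).congr_fun fun n => if_pos rfl

lemma hasSum_upper_geometric {s m : ℝ} (hs : |s| < 1) (hm : |m| < 1) (u : ℝ) :
    HasSum (fun p : ℕ × ℕ => if p.1 < p.2 then s ^ p.1 * m ^ (p.2 - p.1 - 1) * u else 0)
      (u / ((1 - s) * (1 - m))) := by
  have hinj : Function.Injective fun q : ℕ × ℕ => (q.1, q.1 + 1 + q.2) := by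
    rintro ⟨i, k⟩ ⟨j, l⟩ h
    simp only [Prod.mk.injEq] at h
    ext <;> omega
  have hrange : ∀ p ∉ Set.range fun q : ℕ × ℕ => (q.1, q.1 + 1 + q.2),
      (if p.1 < p.2 then s ^ p.1 * m ^ (p.2 - p.1 - 1) * u else 0) = 0 := by
    refine fun p hp => if_neg fun hlt => hp ⟨(p.1, p.2 - p.1 - 1), ?_⟩
    exact Prod.ext rfl (by dsimp only; omega)
  refine (hinj.hasSum_iff hrange).mp ?_
  have hprod : HasSum (fun q : ℕ × ℕ => s ^ q.1 * m ^ q.2) ((1 - s)⁻¹ * (1 - m)⁻¹) :=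
    (hasSum_geometric_of_abs_lt_one hs).mul (hasSum_geometric_of_abs_lt_one hm)
      (summable_mul_of_summable_norm (by simpa using summable_geometric_of_lt_one (abs_nonneg s) hs)
        (by simpa using summable_geometric_of_lt_one (abs_nonneg m) hm))
  rw [div_eq_mul_inv, mul_inv, mul_comm]
  refine (hprod.mul_right u).congr_fun fun q => ?_
  simp only [Function.comp_apply, if_pos (show q.1 < q.1 + 1 + q.2 by omega),
    show q.1 + 1 + q.2 - q.1 - 1 = q.2 by omega]

lemma hasSum_geometric_kernel {s m : ℝ} (hs : |s| < 1) (hm : |m| < 1) (d u : ℝ) :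
    HasSum (fun p : ℕ × ℕ => if p.1 = p.2 then s ^ p.1 * d
      else if p.1 < p.2 then s ^ p.1 * m ^ (p.2 - p.1 - 1) * u
      else s ^ p.2 * m ^ (p.1 - p.2 - 1) * u)
      (d / (1 - s) + 2 * u / ((1 - s) * (1 - m))) := by
  have hupper := hasSum_upper_geometric hs hm u
  have hlower := (Equiv.prodComm ℕ ℕ).hasSum_iff.mpr hupper
  convert (hasSum_diag_geometric hs d).add (hupper.add hlower) using 1
  · ext ⟨i, j⟩
    rcases lt_trichotomy i j with h | rfl | h
    · simp [h, h.ne, h.not_gt]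
    · simp
    · simp [h, h.ne', h.not_gt]
  · ring

section Perpetuity

variable {Ω : Type*} {a e : ℕ → Ω → ℝ}

def perpetuityTerm (a e : ℕ → Ω → ℝ) (i : ℕ) (ω : Ω) : ℝ := (∏ k ∈ range i, a k ω) * e i ω

lemma perpetuityTerm_sq_eq_prod (i : ℕ) (ω : Ω) :
    perpetuityTerm a e i ω ^ 2
      = ∏ k ∈ range (i + 1), (if k < i then a k ω ^ 2 else e k ω ^ 2) := by
  rw [prod_range_succ_ite_lt, perpetuityTerm, mul_pow, prod_pow]

variable [MeasurableSpace Ω] {μ : Measure Ω}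

lemma measurable_perpetuityTerm (hmeas : ∀ k, Measurable fun ω => (a k ω, e k ω)) (i : ℕ) :
    Measurable (perpetuityTerm a e i) :=
  (Finset.measurable_prod _ fun k _ => (hmeas k).fst).mul (hmeas i).snd

lemma integral_perpetuityTerm_sq (hmeas : ∀ k, Measurable fun ω => (a k ω, e k ω))
    (hindep : iIndepFun (fun k ω => (a k ω, e k ω)) μ)
    (hident : ∀ k, IdentDistrib (fun ω => (a k ω, e k ω)) (fun ω => (a 0 ω, e 0 ω)) μ μ)
    (i : ℕ) :
    ∫ ω, perpetuityTerm a e i ω ^ 2 ∂μ = (∫ ω, a 0 ω ^ 2 ∂μ) ^ i * ∫ ω, e 0 ω ^ 2 ∂μ := by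
  let F : ℕ → ℝ × ℝ → ℝ := fun k p => if k < i then p.1 ^ 2 else p.2 ^ 2
  have hF : ∀ k, Measurable (F k) := fun k => by dsimp only [F]; split_ifs <;> fun_prop
  calc ∫ ω, perpetuityTerm a e i ω ^ 2 ∂μ
      = ∫ ω, ∏ k ∈ range (i + 1), F k (a k ω, e k ω) ∂μ := by
        simp_rw [perpetuityTerm_sq_eq_prod]; rfl
    _ = ∏ k ∈ range (i + 1), ∫ ω, F k (a 0 ω, e 0 ω) ∂μ :=
        integral_prod_comp_of_identDistrib hmeas hindep hident hF _
    _ = ∏ k ∈ range (i + 1), (if k < i then ∫ ω, a 0 ω ^ 2 ∂μ else ∫ ω, e 0 ω ^ 2 ∂μ) :=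
        prod_congr rfl fun k _ => by dsimp only [F]; split_ifs <;> rfl
    _ = (∫ ω, a 0 ω ^ 2 ∂μ) ^ i * ∫ ω, e 0 ω ^ 2 ∂μ := by
        rw [prod_range_succ_ite_lt, prod_const, card_range]

lemma memLp_perpetuityTerm (hmeas : ∀ k, Measurable fun ω => (a k ω, e k ω))
    (hindep : iIndepFun (fun k ω => (a k ω, e k ω)) μ)
    (hident : ∀ k, IdentDistrib (fun ω => (a k ω, e k ω)) (fun ω => (a 0 ω, e 0 ω)) μ μ)
    (ha : Integrable (fun ω => a 0 ω ^ 2) μ) (he : Integrable (fun ω => e 0 ω ^ 2) μ) (i : ℕ) :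
    MemLp (perpetuityTerm a e i) 2 μ := by
  let F : ℕ → ℝ × ℝ → ℝ := fun k p => if k < i then p.1 ^ 2 else p.2 ^ 2
  have hF : ∀ k, Measurable (F k) := fun k => by dsimp only [F]; split_ifs <;> fun_prop
  refine (memLp_two_iff_integrable_sq
    (measurable_perpetuityTerm hmeas i).aestronglyMeasurable).2 ?_
  simp_rw [perpetuityTerm_sq_eq_prod]
  exact integrable_prod_comp_of_identDistrib (F := F) hmeas hindep hident hF _
    fun k _ => by dsimp only [F]; split_ifs; exacts [ha, he]

lemma integral_perpetuityTerm_mul_of_lt (hmeas : ∀ k, Measurable fun ω => (a k ω, e k ω))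
    (hindep : iIndepFun (fun k ω => (a k ω, e k ω)) μ)
    (hident : ∀ k, IdentDistrib (fun ω => (a k ω, e k ω)) (fun ω => (a 0 ω, e 0 ω)) μ μ)
    {i j : ℕ} (hij : i < j) :
    ∫ ω, perpetuityTerm a e i ω * perpetuityTerm a e j ω ∂μ
      = (∫ ω, a 0 ω ^ 2 ∂μ) ^ i * (∫ ω, a 0 ω * e 0 ω ∂μ) * (∫ ω, a 0 ω ∂μ) ^ (j - i - 1)
        * ∫ ω, e 0 ω ∂μ := by
  let F : ℕ → ℝ × ℝ → ℝ := fun k p =>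
    if k < i then p.1 ^ 2 else if k = i then p.1 * p.2 else if k < j then p.1 else p.2
  have hF : ∀ k, Measurable (F k) := fun k => by dsimp only [F]; split_ifs <;> fun_prop
  have hprod : ∀ ω, perpetuityTerm a e i ω * perpetuityTerm a e j ω
      = ∏ k ∈ range (j + 1), F k (a k ω, e k ω) := fun ω => by
    dsimp only [F]
    rw [prod_range_succ_ite_lt_eq_lt _ _ _ _ hij, perpetuityTerm, perpetuityTerm,
      prod_range_eq_mul_prod_Ico _ hij, prod_pow]
    ring
  calc ∫ ω, perpetuityTerm a e i ω * perpetuityTerm a e j ω ∂μ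
      = ∫ ω, ∏ k ∈ range (j + 1), F k (a k ω, e k ω) ∂μ := by simp_rw [hprod]
    _ = ∏ k ∈ range (j + 1), ∫ ω, F k (a 0 ω, e 0 ω) ∂μ :=
        integral_prod_comp_of_identDistrib hmeas hindep hident hF _
    _ = ∏ k ∈ range (j + 1), (if k < i then ∫ ω, a 0 ω ^ 2 ∂μ
          else if k = i then ∫ ω, a 0 ω * e 0 ω ∂μ
          else if k < j then ∫ ω, a 0 ω ∂μ else ∫ ω, e 0 ω ∂μ) :=
        prod_congr rfl fun k _ => by dsimp only [F]; split_ifs <;> rfl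
    _ = _ := by
        rw [prod_range_succ_ite_lt_eq_lt _ _ _ _ hij, prod_const, prod_const, card_range,
          Nat.card_Ico, Nat.sub_sub]

lemma hasSum_integral_perpetuityTerm_mul (hmeas : ∀ k, Measurable fun ω => (a k ω, e k ω))
    (hindep : iIndepFun (fun k ω => (a k ω, e k ω)) μ)
    (hident : ∀ k, IdentDistrib (fun ω => (a k ω, e k ω)) (fun ω => (a 0 ω, e 0 ω)) μ μ)
    (hs : |∫ ω, a 0 ω ^ 2 ∂μ| < 1) (hm : |∫ ω, a 0 ω ∂μ| < 1) :
    HasSum (fun p : ℕ × ℕ => ∫ ω, perpetuityTerm a e p.1 ω * perpetuityTerm a e p.2 ω ∂μ)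
      ((∫ ω, e 0 ω ^ 2 ∂μ) / (1 - ∫ ω, a 0 ω ^ 2 ∂μ)
        + 2 * ((∫ ω, a 0 ω * e 0 ω ∂μ) * ∫ ω, e 0 ω ∂μ)
          / ((1 - ∫ ω, a 0 ω ^ 2 ∂μ) * (1 - ∫ ω, a 0 ω ∂μ))) := by
  refine (hasSum_geometric_kernel hs hm _ _).congr_fun fun ⟨i, j⟩ => ?_
  rcases lt_trichotomy i j with h | rfl | h
  · simp only [if_neg h.ne, if_pos h, integral_perpetuityTerm_mul_of_lt hmeas hindep hident h]
    ring
  · rw [if_pos rfl, ← integral_perpetuityTerm_sq hmeas hindep hident]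
    simp only [sq]
  · simp only [if_neg h.ne', if_neg h.not_gt, mul_comm (perpetuityTerm a e i _),
      integral_perpetuityTerm_mul_of_lt hmeas hindep hident h]
    ring

lemma summable_sqrt_integral_perpetuityTerm_sq (hmeas : ∀ k, Measurable fun ω => (a k ω, e k ω))
    (hindep : iIndepFun (fun k ω => (a k ω, e k ω)) μ)
    (hident : ∀ k, IdentDistrib (fun ω => (a k ω, e k ω)) (fun ω => (a 0 ω, e 0 ω)) μ μ)
    (hs : ∫ ω, a 0 ω ^ 2 ∂μ < 1) :
    Summable fun i => √(∫ ω, perpetuityTerm a e i ω ^ 2 ∂μ) := by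
  simp_rw [integral_perpetuityTerm_sq hmeas hindep hident]
  set s := ∫ ω, a 0 ω ^ 2 ∂μ
  have hs0 : 0 ≤ s := integral_nonneg fun ω => sq_nonneg _
  have hpow : ∀ i, √(s ^ i) = √s ^ i := fun i => by
    rw [Real.sqrt_eq_iff_eq_sq (pow_nonneg hs0 i) (pow_nonneg (Real.sqrt_nonneg s) i),
      ← pow_mul, mul_comm, pow_mul, Real.sq_sqrt hs0]
  have hsqrt : √s < 1 := (Real.sqrt_lt' one_pos).2 (by rwa [one_pow])
  simp_rw [Real.sqrt_mul (pow_nonneg hs0 _), hpow]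
  exact (summable_geometric_of_lt_one (Real.sqrt_nonneg s) hsqrt).mul_right _

theorem integral_sq_tsum_perpetuityTerm [IsProbabilityMeasure μ]
    (hmeas : ∀ k, Measurable fun ω => (a k ω, e k ω))
    (hindep : iIndepFun (fun k ω => (a k ω, e k ω)) μ)
    (hident : ∀ k, IdentDistrib (fun ω => (a k ω, e k ω)) (fun ω => (a 0 ω, e 0 ω)) μ μ)
    (ha : Integrable (fun ω => a 0 ω ^ 2) μ) (he : Integrable (fun ω => e 0 ω ^ 2) μ)
    (hs : ∫ ω, a 0 ω ^ 2 ∂μ < 1) :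
    ∫ ω, (∑' i, perpetuityTerm a e i ω) ^ 2 ∂μ
      = (∫ ω, e 0 ω ^ 2 ∂μ) / (1 - ∫ ω, a 0 ω ^ 2 ∂μ)
        + 2 * ((∫ ω, a 0 ω * e 0 ω ∂μ) * ∫ ω, e 0 ω ∂μ)
          / ((1 - ∫ ω, a 0 ω ^ 2 ∂μ) * (1 - ∫ ω, a 0 ω ∂μ)) := by
  have hs0 : 0 ≤ ∫ ω, a 0 ω ^ 2 ∂μ := integral_nonneg fun ω => sq_nonneg _
  have hm : |∫ ω, a 0 ω ∂μ| < 1 := (sq_lt_one_iff_abs_lt_one _).1 <|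
    (sq_integral_le_integral_sq ((memLp_two_iff_integrable_sq
      (hmeas 0).fst.aestronglyMeasurable).2 ha)).trans_lt hs
  exact integral_sq_tsum_of_hasSum (memLp_perpetuityTerm hmeas hindep hident ha he)
    (summable_sqrt_integral_perpetuityTerm_sq hmeas hindep hident hs)
    (hasSum_integral_perpetuityTerm_mul hmeas hindep hident (by rwa [abs_of_nonneg hs0]) hm)

end Perpetuity

theorem stmt_2_general {Ω : Type*} [MeasurableSpace Ω] (μ : Measure Ω) [IsProbabilityMeasure μ]
    (a e : ℕ → Ω → ℝ)
    (hmeas : ∀ k, Measurable fun ω => (a k ω, e k ω))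
    (hindep : iIndepFun (fun k ω => (a k ω, e k ω)) μ)
    (hident : ∀ k, 2 ≤ k →
      IdentDistrib (fun ω => (a k ω, e k ω)) (fun ω => (a 2 ω, e 2 ω)) μ μ)
    (hL2a : Integrable (fun ω => a 2 ω ^ 2) μ) (hL2e : Integrable (fun ω => e 2 ω ^ 2) μ)
    (m s mu c : ℝ)
    (hm : (∫ ω, a 2 ω ∂μ) = m) (hs : (∫ ω, a 2 ω ^ 2 ∂μ) = s)
    (hmu : (∫ ω, e 2 ω ∂μ) = mu)
    (hc : (∫ ω, a 2 ω * e 2 ω ∂μ) = c)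
    (hslt : s < 1)
    (T : Ω → ℝ)
    (hT : ∀ ω, T ω = ∑' i : ℕ, (∏ j ∈ Finset.Ico 2 (i + 2), a j ω) * e (i + 2) ω) :
    (∫ ω, T ω ^ 2 ∂μ)
      = (∫ ω, e 2 ω ^ 2 ∂μ) / (1 - s) + 2 * c * mu / ((1 - s) * (1 - m)) := by
  have hT' : T = fun ω => ∑' i, perpetuityTerm (fun k => a (k + 2)) (fun k => e (k + 2)) i ω :=
    funext fun ω => (hT ω).trans <| tsum_congr fun i => by
      rw [perpetuityTerm, prod_Ico_eq_prod_range, add_tsub_cancel_right]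
      simp only [add_comm]
  rw [hT', integral_sq_tsum_perpetuityTerm (fun k => hmeas (k + 2))
    (hindep.precomp (add_left_injective 2)) (fun k => hident (k + 2) (by omega)) hL2a hL2e
    (hs ▸ hslt), hs, hm, hc, hmu]
  ring

theorem stmt_2 {Ω : Type*} [MeasurableSpace Ω] (μ : Measure Ω) [IsProbabilityMeasure μ]
    (a e : ℕ → Ω → ℝ)
    (hmeas : ∀ k, Measurable fun ω => (a k ω, e k ω))
    (hindep : iIndepFun (fun k ω => (a k ω, e k ω)) μ)
    (hident : ∀ k, 2 ≤ k →
      IdentDistrib (fun ω => (a k ω, e k ω)) (fun ω => (a 2 ω, e 2 ω)) μ μ)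
    (hL2a : Integrable (fun ω => a 2 ω ^ 2) μ) (hL2e : Integrable (fun ω => e 2 ω ^ 2) μ)
    (m s mu s2 c : ℝ)
    (hm : (∫ ω, a 2 ω ∂μ) = m) (hs : (∫ ω, a 2 ω ^ 2 ∂μ) = s)
    (hmu : (∫ ω, e 2 ω ∂μ) = mu)
    (hs2 : (∫ ω, (e 2 ω - mu) ^ 2 ∂μ) = s2)
    (hc : (∫ ω, a 2 ω * e 2 ω ∂μ) = c)
    (hslt : s < 1)
    (T : Ω → ℝ) (hTL2 : Integrable (fun ω => T ω ^ 2) μ)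
    (hT : ∀ ω, T ω = ∑' i : ℕ, (∏ j ∈ Finset.Ico 2 (i + 2), a j ω) * e (i + 2) ω) :
    (∫ ω, T ω ^ 2 ∂μ)
      = (∫ ω, e 2 ω ^ 2 ∂μ) / (1 - s) + 2 * c * mu / ((1 - s) * (1 - m)) :=
  stmt_2_general μ a e hmeas hindep hident hL2a hL2e m s mu c hm hs hmu hc hslt T hT
end

section
/- Let T be a real random variable with E[T²] < ∞ that is not almost surely constant. Then the 2×2 matrix C = E[(1/(1+T²)) · [[T², T],[T, 1]]] is symmetric positive definite. -/
/-!
`C` is the Gram matrix, in `L²(μ)`, of the bounded functions `T / √(1 + T²)` and `1 / √(1 + T²)`.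
A Gram matrix is positive definite exactly when its vectors are linearly independent, and a
relation `a T + b = 0` holding almost everywhere forces `a = 0` (otherwise `T` is a.s. constant)
and then `b = 0`.
-/

open MeasureTheory

section Gram

variable {Ω : Type*} [MeasurableSpace Ω] {μ : Measure Ω} {u v : Ω → ℝ}

lemma inner_toLp_toLp (hu : MemLp u 2 μ) (hv : MemLp v 2 μ) :
    inner ℝ (hu.toLp u) (hv.toLp v) = ∫ ω, u ω * v ω ∂μ := by
  rw [L2.inner_def]
  refine integral_congr_ae ?_
  filter_upwards [hu.coeFn_toLp, hv.coeFn_toLp] with ω hu' hv'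
  simp [hu', hv', mul_comm]

lemma linearIndependent_toLp_pair (hu : MemLp u 2 μ) (hv : MemLp v 2 μ)
    (hind : ∀ a b : ℝ, (∀ᵐ ω ∂μ, a * u ω + b * v ω = 0) → a = 0 ∧ b = 0) :
    LinearIndependent ℝ ![hu.toLp u, hv.toLp v] := by
  refine LinearIndependent.pair_iff.mpr fun a b h => hind a b ?_
  filter_upwards [Lp.coeFn_add (a • hu.toLp u) (b • hv.toLp v), Lp.coeFn_smul a (hu.toLp u),
    Lp.coeFn_smul b (hv.toLp v), hu.coeFn_toLp, hv.coeFn_toLp, Lp.coeFn_zero ℝ 2 μ]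
    with ω hadd hsmulu hsmulv hu' hv' hzero
  rw [h] at hadd
  rw [← hu', ← hv']
  simpa [hsmulu, hsmulv] using hadd.symm.trans hzero

theorem posDef_integral_gram (hu : MemLp u 2 μ) (hv : MemLp v 2 μ)
    (hind : ∀ a b : ℝ, (∀ᵐ ω ∂μ, a * u ω + b * v ω = 0) → a = 0 ∧ b = 0) :
    (!![∫ ω, u ω ^ 2 ∂μ, ∫ ω, u ω * v ω ∂μ; ∫ ω, u ω * v ω ∂μ, ∫ ω, v ω ^ 2 ∂μ] :
      Matrix (Fin 2) (Fin 2) ℝ).PosDef := by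
  have hgram : Matrix.gram ℝ ![hu.toLp u, hv.toLp v] =
      !![∫ ω, u ω ^ 2 ∂μ, ∫ ω, u ω * v ω ∂μ; ∫ ω, u ω * v ω ∂μ, ∫ ω, v ω ^ 2 ∂μ] := by
    ext i j
    fin_cases i <;> fin_cases j <;>
      simp only [Matrix.gram, Matrix.of_apply, Matrix.cons_val_zero, Matrix.cons_val_one,
        Matrix.cons_val_fin_one, Fin.zero_eta, Fin.mk_one, inner_toLp_toLp, sq, mul_comm]
  exact hgram ▸ Matrix.posDef_gram_of_linearIndependent (linearIndependent_toLp_pair hu hv hind)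

end Gram

section NormalizedPair

variable {Ω : Type*} [MeasurableSpace Ω] (μ : Measure Ω) [IsFiniteMeasure μ] {T : Ω → ℝ}

lemma memLp_div_sqrt_one_add_sq (hT : Measurable T) :
    MemLp (fun ω => T ω / √(1 + T ω ^ 2)) 2 μ := by
  refine MemLp.of_bound (by fun_prop : Measurable _).aestronglyMeasurable 1
    (ae_of_all _ fun ω => ?_)
  have hs : 0 < √(1 + T ω ^ 2) := Real.sqrt_pos.2 (by positivity)
  rw [norm_div, Real.norm_of_nonneg hs.le, div_le_one hs]
  exact Real.abs_le_sqrt (by linarith)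

lemma memLp_one_div_sqrt_one_add_sq (hT : Measurable T) :
    MemLp (fun ω => 1 / √(1 + T ω ^ 2)) 2 μ := by
  refine MemLp.of_bound (by fun_prop : Measurable _).aestronglyMeasurable 1
    (ae_of_all _ fun ω => ?_)
  have hs : 0 < √(1 + T ω ^ 2) := Real.sqrt_pos.2 (by positivity)
  rw [norm_div, Real.norm_of_nonneg hs.le, div_le_one hs, norm_one]
  exact Real.one_le_sqrt.2 (by nlinarith)

end NormalizedPair

lemma eq_zero_of_ae_mul_add_eq_zero {Ω : Type*} [MeasurableSpace Ω] {μ : Measure Ω} [NeZero μ]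
    {T : Ω → ℝ} (hnondeg : ¬ ∃ c : ℝ, T =ᵐ[μ] fun _ => c) {a b : ℝ}
    (h : ∀ᵐ ω ∂μ, a * T ω + b = 0) : a = 0 ∧ b = 0 := by
  obtain rfl : a = 0 := by
    by_contra ha
    refine hnondeg ⟨-b / a, ?_⟩
    filter_upwards [h] with ω hω
    field_simp
    linarith
  obtain ⟨ω, hω⟩ := h.exists
  exact ⟨rfl, by simpa using hω⟩

theorem stmt_4_general {Ω : Type*} [MeasurableSpace Ω] (μ : Measure Ω) [IsProbabilityMeasure μ]
    (T : Ω → ℝ) (hmeas : Measurable T)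
    (hnondeg : ¬ ∃ c : ℝ, T =ᵐ[μ] fun _ => c) :
    (!![∫ ω, T ω ^ 2 / (1 + T ω ^ 2) ∂μ, ∫ ω, T ω / (1 + T ω ^ 2) ∂μ;
        ∫ ω, T ω / (1 + T ω ^ 2) ∂μ, ∫ ω, 1 / (1 + T ω ^ 2) ∂μ] :
      Matrix (Fin 2) (Fin 2) ℝ).PosDef := by
  have hs_pos (ω : Ω) : 0 < √(1 + T ω ^ 2) := Real.sqrt_pos.2 (by positivity)
  have hs_sq (ω : Ω) : √(1 + T ω ^ 2) ^ 2 = 1 + T ω ^ 2 := Real.sq_sqrt (by positivity)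
  have h11 (ω : Ω) : T ω ^ 2 / (1 + T ω ^ 2) = (T ω / √(1 + T ω ^ 2)) ^ 2 := by
    rw [div_pow, hs_sq]
  have h12 (ω : Ω) : T ω / (1 + T ω ^ 2) = T ω / √(1 + T ω ^ 2) * (1 / √(1 + T ω ^ 2)) := by
    rw [div_mul_div_comm, mul_one, ← sq, hs_sq]
  have h22 (ω : Ω) : 1 / (1 + T ω ^ 2) = (1 / √(1 + T ω ^ 2)) ^ 2 := by
    rw [div_pow, one_pow, hs_sq]
  simp only [h11, h12, h22]
  refine posDef_integral_gram (memLp_div_sqrt_one_add_sq μ hmeas)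
    (memLp_one_div_sqrt_one_add_sq μ hmeas) fun a b h => eq_zero_of_ae_mul_add_eq_zero hnondeg ?_
  filter_upwards [h] with ω hω
  rwa [mul_one_div, mul_div, ← add_div, div_eq_zero_iff, or_iff_left (hs_pos ω).ne'] at hω

theorem stmt_4 {Ω : Type*} [MeasurableSpace Ω] (μ : Measure Ω) [IsProbabilityMeasure μ]
    (T : Ω → ℝ) (hmeas : Measurable T)
    (hL2 : Integrable (fun ω => T ω ^ 2) μ)
    (hnondeg : ¬ ∃ c : ℝ, T =ᵐ[μ] fun _ => c) :
    (!![∫ ω, T ω ^ 2 / (1 + T ω ^ 2) ∂μ, ∫ ω, T ω / (1 + T ω ^ 2) ∂μ;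
        ∫ ω, T ω / (1 + T ω ^ 2) ∂μ, ∫ ω, 1 / (1 + T ω ^ 2) ∂μ] :
      Matrix (Fin 2) (Fin 2) ℝ).PosDef :=
  stmt_4_general μ T hmeas hnondeg
end

section
/- Let S and S' be symmetric positive definite d×d real matrices with S' = S + Ψ Ψ^t for some d×m matrix Ψ. Then S'^{-1} Ψ Ψ^t S'^{-1} ≤ S^{-1} − S'^{-1} in the Loewner order. -/
open Matrix

theorem stmt_16 {d m : ℕ} (S S' : Matrix (Fin d) (Fin d) ℝ) (Ψ : Matrix (Fin d) (Fin m) ℝ)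
    (hS : S.PosDef) (hS' : S'.PosDef) (h : S' = S + Ψ * Ψᵀ) :
    (S⁻¹ - S'⁻¹ - S'⁻¹ * Ψ * Ψᵀ * S'⁻¹).PosSemidef := by
  have hdS : IsUnit S.det := isUnit_iff_ne_zero.mpr (ne_of_gt hS.det_pos)
  have hdS' : IsUnit S'.det := isUnit_iff_ne_zero.mpr (ne_of_gt hS'.det_pos)
  have e1 : S * S⁻¹ = 1 := Matrix.mul_nonsing_inv _ hdS
  have e2 : S⁻¹ * S = 1 := Matrix.nonsing_inv_mul _ hdS
  have e3 : S' * S'⁻¹ = 1 := Matrix.mul_nonsing_inv _ hdS'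
  have e4 : S'⁻¹ * S' = 1 := Matrix.nonsing_inv_mul _ hdS'
  have hPsi : Ψ * Ψᵀ = S' - S := by rw [h]; abel
  have hA : S'⁻¹ * (Ψ * Ψᵀ) * S⁻¹ = S⁻¹ - S'⁻¹ := by
    rw [hPsi, Matrix.mul_sub, Matrix.sub_mul, e4, Matrix.one_mul, Matrix.mul_assoc, e1,
      Matrix.mul_one]
  have hB : S⁻¹ * ((Ψ * Ψᵀ) * S'⁻¹) = S⁻¹ - S'⁻¹ := by
    rw [hPsi, Matrix.sub_mul, Matrix.mul_sub, e3, Matrix.mul_one, ← Matrix.mul_assoc, e2,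
      Matrix.one_mul]
  have key : S⁻¹ - S'⁻¹ - S'⁻¹ * Ψ * Ψᵀ * S'⁻¹
      = S'⁻¹ * ((Ψ * Ψᵀ) * S⁻¹ * (Ψ * Ψᵀ)) * S'⁻¹ := by
    have expand : S'⁻¹ * ((Ψ * Ψᵀ) * S⁻¹ * (Ψ * Ψᵀ)) * S'⁻¹
        = (S'⁻¹ * (Ψ * Ψᵀ)) * (S⁻¹ * ((Ψ * Ψᵀ) * S'⁻¹)) := by
      simp only [Matrix.mul_assoc]
    rw [expand, hB, Matrix.mul_sub, hA]
    simp only [Matrix.mul_assoc]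
  rw [key]
  have hN : ((Ψ * Ψᵀ) * S⁻¹ * (Ψ * Ψᵀ)).PosSemidef := by
    have := (hS.inv.posSemidef).mul_mul_conjTranspose_same (Ψ * Ψᵀ)
    simpa using this
  have := hN.mul_mul_conjTranspose_same S'⁻¹
  have hherm : (S'⁻¹)ᴴ = S'⁻¹ := hS'.inv.isHermitian
  rwa [hherm] at this
end
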